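/- Let S be a set and e : S ≃ S a bijection with the orbit {eⁿ(s) : n ∈ ℤ} of every s ∈ S infinite, and let T = FreeGroup.freeGroupCongr e be the induced automorphism of Γ = FreeGroup S. Let k ≥ 1 and let F₁, …, F_k be finite subsets of Γ. Then there exists N ∈ ℕ such that for every n : {1,…,k} → ℤ with |n(i) − n(j)| ≥ N for all i ≠ j, and for all g₁ ∈ F₁, …, g_k ∈ F_k, one has T^{n(1)}(g₁) · T^{n(2)}(g₂) ⋯ T^{n(k)}(g_k) = 1 if and only if g₁ = g₂ = ⋯ = g_k = 1. -/

import Mathlib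

/-!
The finitely many words in the `F i` involve only a finite set `A` of generators. Since the
orbits of `e` are infinite, each pair `a, b ∈ A` satisfies `eᵐ a = b` for at most one `m`, so
once the shifts `n i` are far apart the translates `e^{n i} '' A` are pairwise disjoint. In a free
group, a product of elements supported on pairwise disjoint sets of generators can only be trivial
if every factor is: the retraction killing all generators outside the `i`-th set sends the product
to its `i`-th factor.
-/

open Subgroup Function

theorem List.prod_ofFn_eq_of_forall_ne {M : Type*} [Monoid M] :
    ∀ {k : ℕ} (f : Fin k → M) (i : Fin k), (∀ j, j ≠ i → f j = 1) → (List.ofFn f).prod = f i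
  | _ + 1, f, i, hf => by
    rw [List.ofFn_succ, List.prod_cons]
    cases i using Fin.cases with
    | zero =>
      rw [List.prod_eq_one, mul_one]
      simpa [List.mem_ofFn] using fun j => hf j.succ (Fin.succ_ne_zero j)
    | succ i =>
      rw [hf 0 (Fin.succ_ne_zero i).symm, one_mul,
        List.prod_ofFn_eq_of_forall_ne (fun j => f j.succ) i fun j hj => hf _ (by simpa using hj)]

namespace FreeGroup

variable {S : Type*}

def freeGroupCongrHom : Equiv.Perm S →* MulAut (FreeGroup S) where
  toFun := freeGroupCongr
  map_one' := freeGroupCongr_refl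
  map_mul' u v := (freeGroupCongr_trans v u).symm

theorem freeGroupCongr_zpow (e : Equiv.Perm S) (n : ℤ) :
    freeGroupCongr e ^ n = freeGroupCongr (e ^ n) :=
  (map_zpow freeGroupCongrHom e n).symm

theorem exists_finset_mem_closure_of (g : FreeGroup S) :
    ∃ A : Finset S, g ∈ closure (of '' A) := by
  classical
  induction g with
  | C1 => exact ⟨∅, one_mem _⟩
  | of s => exact ⟨{s}, subset_closure (by simp)⟩
  | inv_of s ih => exact ih.imp fun A hA => inv_mem hA
  | mul g h ihg ihh =>
    obtain ⟨A, hA⟩ := ihg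
    obtain ⟨B, hB⟩ := ihh
    refine ⟨A ∪ B, mul_mem ?_ ?_⟩
    · exact closure_mono (Set.image_mono (by simp)) hA
    · exact closure_mono (Set.image_mono (by simp)) hB

theorem exists_finset_forall_mem_closure_of (F : Finset (FreeGroup S)) :
    ∃ A : Finset S, ∀ g ∈ F, g ∈ closure (of '' A) := by
  classical
  choose A hA using exists_finset_mem_closure_of (S := S)
  exact ⟨F.biUnion A, fun g hg =>
    closure_mono (Set.image_mono (Finset.coe_subset.2 (Finset.subset_biUnion_of_mem A hg))) (hA g)⟩

theorem freeGroupCongr_mem_closure_of {T : Type*} (e : S ≃ T) {A : Set S} {g : FreeGroup S}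
    (hg : g ∈ closure (of '' A)) : freeGroupCongr e g ∈ closure (of '' (e '' A)) := by
  simpa [MonoidHom.map_closure, Set.image_image] using
    mem_map_of_mem (freeGroupCongr e : FreeGroup S →* FreeGroup T) hg

open Classical in
noncomputable def retract (B : Set S) : FreeGroup S →* FreeGroup S :=
  lift fun s => if s ∈ B then of s else 1

theorem retract_eq_self {B : Set S} {g : FreeGroup S} (hg : g ∈ closure (of '' B)) :
    retract B g = g :=
  MonoidHom.eqOn_closure (f := retract B) (g := MonoidHom.id _)
    (by rintro _ ⟨s, hs, rfl⟩; simp [retract, hs]) hg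

theorem retract_eq_one {B C : Set S} (hBC : _root_.Disjoint B C) {g : FreeGroup S}
    (hg : g ∈ closure (of '' C)) : retract B g = 1 := by
  refine (closure_le (retract B).ker).2 ?_ hg
  rintro _ ⟨s, hs, rfl⟩
  simp [retract, hBC.notMem_of_mem_right hs]

theorem prod_ofFn_eq_one_iff {k : ℕ} {B : Fin k → Set S} (hB : Pairwise (_root_.Disjoint on B))
    {g : Fin k → FreeGroup S} (hg : ∀ i, g i ∈ closure (of '' B i)) :
    (List.ofFn g).prod = 1 ↔ ∀ i, g i = 1 := by
  refine ⟨fun h i => ?_, fun h => List.prod_eq_one (by simp [List.mem_ofFn, h])⟩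
  have := congrArg (retract (B i)) h
  rwa [map_list_prod, List.map_ofFn, List.prod_ofFn_eq_of_forall_ne _ i, _root_.map_one,
    comp_apply, retract_eq_self (hg i)] at this
  exact fun j hj => retract_eq_one (hB hj.symm) (hg j)

end FreeGroup

namespace Equiv.Perm

variable {S : Type*}

theorem zpow_sub_apply_eq_iff (e : Perm S) (m n : ℤ) (a b : S) :
    (e ^ (m - n)) a = b ↔ (e ^ m) a = (e ^ n) b := by
  rw [← (e ^ n).injective.eq_iff, ← Perm.mul_apply, ← zpow_add, add_sub_cancel]

theorem injective_zpow_apply_of_infinite_range {e : Perm S} {s : S}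
    (hs : (Set.range fun n : ℤ => (e ^ n) s).Infinite) :
    Injective fun n : ℤ => (e ^ n) s := by
  have hperiod : MulAction.period e s = 0 := by
    by_contra hp
    refine hs (((Set.finite_Ico 0 (MulAction.period e s : ℤ)).image fun n => (e ^ n) s).subset ?_)
    rintro _ ⟨n, rfl⟩
    exact ⟨n % MulAction.period e s,
      ⟨Int.emod_nonneg _ (by omega), Int.emod_lt_of_pos _ (by omega)⟩,
      MulAction.zpow_mod_period_smul (g := e) (a := s) n⟩
  intro m n hmn
  have hfix : (e ^ (m - n)) s = s := (zpow_sub_apply_eq_iff e m n s s).2 hmn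
  simpa [hperiod, sub_eq_zero] using
    (MulAction.zpow_smul_eq_iff_period_dvd (g := e) (a := s)).1 hfix

theorem exists_forall_disjoint_zpow_image {e : Perm S} {A : Finset S}
    (hA : ∀ a ∈ A, (Set.range fun n : ℤ => (e ^ n) a).Infinite) :
    ∃ N : ℕ, ∀ m n : ℤ, (N : ℤ) ≤ |m - n| → _root_.Disjoint ((e ^ m) '' A) ((e ^ n) '' A) := by
  set D := ⋃ a ∈ A, ⋃ b ∈ A, {d : ℤ | (e ^ d) a = b}
  have hD : D.Finite := A.finite_toSet.biUnion fun a ha => A.finite_toSet.biUnion fun b _ =>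
    Set.Subsingleton.finite fun d hd d' hd' =>
      injective_zpow_apply_of_infinite_range (hA a ha) (hd.trans hd'.symm)
  obtain ⟨N, hN⟩ := (hD.image Int.natAbs).bddAbove
  refine ⟨N + 1, fun m n hmn => Set.disjoint_left.2 ?_⟩
  rintro _ ⟨a, ha, rfl⟩ ⟨b, hb, hab⟩
  have hd : m - n ∈ D := by
    simp only [D, Set.mem_iUnion]
    exact ⟨a, ha, b, hb, (zpow_sub_apply_eq_iff e m n a b).2 hab.symm⟩
  have := hN ⟨_, hd, rfl⟩
  rw [Int.abs_eq_natAbs] at hmn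
  omega

end Equiv.Perm

theorem free_joinings_stmt8_general
    {S : Type*} (e : S ≃ S)
    (horb : ∀ s : S, (Set.range fun n : ℤ => (e ^ n) s).Infinite)
    (k : ℕ) (F : Fin k → Finset (FreeGroup S)) :
    ∃ N : ℕ, ∀ n : Fin k → ℤ, (∀ i j, i ≠ j → (N : ℤ) ≤ |n i - n j|) →
      ∀ g : Fin k → FreeGroup S, (∀ i, g i ∈ F i) →
        ((List.ofFn fun i =>
          ((FreeGroup.freeGroupCongr e ^ n i :
            FreeGroup S ≃* FreeGroup S) (g i))).prod = 1 ↔ ∀ i, g i = 1) := by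
  classical
  obtain ⟨A, hA⟩ := FreeGroup.exists_finset_forall_mem_closure_of (Finset.univ.biUnion F)
  obtain ⟨N, hN⟩ :=
    Equiv.Perm.exists_forall_disjoint_zpow_image (e := e) (A := A) fun a _ => horb a
  refine ⟨N, fun n hn g hg => ?_⟩
  rw [FreeGroup.prod_ofFn_eq_one_iff (B := fun i => (e ^ n i) '' A)
    (fun i j hij => hN _ _ (hn i j hij))]
  · exact forall_congr' fun i => EmbeddingLike.map_eq_one_iff
  · intro i
    rw [FreeGroup.freeGroupCongr_zpow]
    exact FreeGroup.freeGroupCongr_mem_closure_of _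
      (hA _ (Finset.mem_biUnion.2 ⟨i, Finset.mem_univ _, hg i⟩))

/-- group-theoretic content of the k-mixing consequence of
Theorem 4.1. Let `e : S ≃ S` have all orbits infinite, `T = FreeGroup.freeGroupCongr e`,
and let `F 0, …, F (k-1)` be finite subsets of `FreeGroup S`. Then there is `N` such that
whenever `|n i − n j| ≥ N` for all `i ≠ j` and `g i ∈ F i` for all `i`, one has
`T^{n 0}(g 0) ⋯ T^{n (k-1)}(g (k-1)) = 1` iff all `g i = 1`. -/
theorem free_joinings_stmt8
    {S : Type*} (e : S ≃ S)
    (horb : ∀ s : S, (Set.range fun n : ℤ => (e ^ n) s).Infinite)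
    (k : ℕ) (hk : 1 ≤ k) (F : Fin k → Finset (FreeGroup S)) :
    ∃ N : ℕ, ∀ n : Fin k → ℤ, (∀ i j, i ≠ j → (N : ℤ) ≤ |n i - n j|) →
      ∀ g : Fin k → FreeGroup S, (∀ i, g i ∈ F i) →
        ((List.ofFn fun i =>
          ((FreeGroup.freeGroupCongr e ^ n i :
            FreeGroup S ≃* FreeGroup S) (g i))).prod = 1 ↔ ∀ i, g i = 1) :=
  free_joinings_stmt8_general e horb k F
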